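/- Let ε > 0 and define, for t ≥ 0 and x ∈ ℝ, the three exponents a(t,x) = (−x + 0.5 − 4.95 t)/(20 ε), b(t,x) = (−x + 0.5 − 0.75 t)/(4 ε), c(t,x) = (−x + 0.375)/(2 ε), and the function u(t,x) = (0.1·e^{a(t,x)} + 0.5·e^{b(t,x)} + e^{c(t,x)}) / (e^{a(t,x)} + e^{b(t,x)} + e^{c(t,x)}). Then u is smooth on ℝ × ℝ and satisfies Burgers' equation ∂u/∂t = ε·∂²u/∂x² − u·∂u/∂x at every point (t,x) ∈ ℝ × ℝ. -/
import Mathlib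

open Real

noncomputable def EA (ε t x : ℝ) : ℝ := Real.exp ((-x + 0.5 - 4.95 * t) / (20 * ε))
noncomputable def EB (ε t x : ℝ) : ℝ := Real.exp ((-x + 0.5 - 0.75 * t) / (4 * ε))
noncomputable def EC (ε x : ℝ) : ℝ := Real.exp ((-x + 0.375) / (2 * ε))
noncomputable def ED (ε t x : ℝ) : ℝ := EA ε t x + EB ε t x + EC ε x
noncomputable def UN (ε t x : ℝ) : ℝ := 0.1 * EA ε t x + 0.5 * EB ε t x + EC ε x
noncomputable def UU (ε t x : ℝ) : ℝ := UN ε t x / ED ε t x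

lemma hED_pos (ε t x : ℝ) : 0 < ED ε t x := by
  unfold ED EA EB EC; positivity

lemma hEA_x (ε t x : ℝ) : HasDerivAt (fun y => EA ε t y) (EA ε t x * (-1/(20*ε))) x := by
  have h : HasDerivAt (fun y : ℝ => (-y + 0.5 - 4.95*t)/(20*ε)) (-1/(20*ε)) x := by
    simpa using (((hasDerivAt_id x).neg.add_const (0.5:ℝ)).sub_const (4.95*t)).div_const (20*ε)
  simpa only [EA] using h.exp

lemma hEB_x (ε t x : ℝ) : HasDerivAt (fun y => EB ε t y) (EB ε t x * (-1/(4*ε))) x := by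
  have h : HasDerivAt (fun y : ℝ => (-y + 0.5 - 0.75*t)/(4*ε)) (-1/(4*ε)) x := by
    simpa using (((hasDerivAt_id x).neg.add_const (0.5:ℝ)).sub_const (0.75*t)).div_const (4*ε)
  simpa only [EB] using h.exp

lemma hEC_x (ε x : ℝ) : HasDerivAt (fun y => EC ε y) (EC ε x * (-1/(2*ε))) x := by
  have h : HasDerivAt (fun y : ℝ => (-y + 0.375)/(2*ε)) (-1/(2*ε)) x := by
    simpa using ((hasDerivAt_id x).neg.add_const (0.375:ℝ)).div_const (2*ε)
  simpa only [EC] using h.exp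

lemma hEA_t (ε t x : ℝ) : HasDerivAt (fun s => EA ε s x) (EA ε t x * (-4.95/(20*ε))) t := by
  have h : HasDerivAt (fun s : ℝ => (-x + 0.5 - 4.95*s)/(20*ε)) (-4.95/(20*ε)) t := by
    simpa using (((hasDerivAt_id t).const_mul (4.95:ℝ)).const_sub (-x+0.5)).div_const (20*ε)
  simpa only [EA] using h.exp

lemma hEB_t (ε t x : ℝ) : HasDerivAt (fun s => EB ε s x) (EB ε t x * (-0.75/(4*ε))) t := by
  have h : HasDerivAt (fun s : ℝ => (-x + 0.5 - 0.75*s)/(4*ε)) (-0.75/(4*ε)) t := by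
    simpa using (((hasDerivAt_id t).const_mul (0.75:ℝ)).const_sub (-x+0.5)).div_const (4*ε)
  simpa only [EB] using h.exp

lemma hUN_x (ε t x : ℝ) : HasDerivAt (fun y => UN ε t y)
    (0.1 * (EA ε t x * (-1/(20*ε))) + 0.5 * (EB ε t x * (-1/(4*ε))) + EC ε x * (-1/(2*ε))) x := by
  exact (((hEA_x ε t x).const_mul 0.1).add ((hEB_x ε t x).const_mul 0.5)).add (hEC_x ε x)

lemma hED_x (ε t x : ℝ) : HasDerivAt (fun y => ED ε t y)
    (EA ε t x * (-1/(20*ε)) + EB ε t x * (-1/(4*ε)) + EC ε x * (-1/(2*ε))) x := by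
  exact ((hEA_x ε t x).add (hEB_x ε t x)).add (hEC_x ε x)

noncomputable def Ux (ε t x : ℝ) : ℝ :=
  ((0.1 * (EA ε t x * (-1/(20*ε))) + 0.5 * (EB ε t x * (-1/(4*ε))) + EC ε x * (-1/(2*ε))) * ED ε t x
    - UN ε t x * (EA ε t x * (-1/(20*ε)) + EB ε t x * (-1/(4*ε)) + EC ε x * (-1/(2*ε)))) / ED ε t x ^ 2

lemma hU_x (ε t x : ℝ) : HasDerivAt (fun y => UU ε t y) (Ux ε t x) x := by
  exact (hUN_x ε t x).div (hED_x ε t x) (hED_pos ε t x).ne'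

lemma smoothU (ε : ℝ) : ContDiff ℝ (⊤ : ℕ∞) (fun p : ℝ × ℝ => UU ε p.1 p.2) := by
  have hA : ContDiff ℝ (⊤ : ℕ∞) (fun p : ℝ × ℝ => EA ε p.1 p.2) := by
    unfold EA
    exact Real.contDiff_exp.comp
      (((contDiff_snd.neg.add contDiff_const).sub (contDiff_const.mul contDiff_fst)).div_const _)
  have hB : ContDiff ℝ (⊤ : ℕ∞) (fun p : ℝ × ℝ => EB ε p.1 p.2) := by
    unfold EB
    exact Real.contDiff_exp.comp
      (((contDiff_snd.neg.add contDiff_const).sub (contDiff_const.mul contDiff_fst)).div_const _)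
  have hC : ContDiff ℝ (⊤ : ℕ∞) (fun p : ℝ × ℝ => EC ε p.2) := by
    unfold EC
    exact Real.contDiff_exp.comp ((contDiff_snd.neg.add contDiff_const).div_const _)
  have hN : ContDiff ℝ (⊤ : ℕ∞) (fun p : ℝ × ℝ => UN ε p.1 p.2) := by
    unfold UN
    exact ((contDiff_const.mul hA).add (contDiff_const.mul hB)).add hC
  have hD : ContDiff ℝ (⊤ : ℕ∞) (fun p : ℝ × ℝ => ED ε p.1 p.2) := by
    unfold ED
    exact (hA.add hB).add hC
  exact hN.div hD (fun p => (hED_pos ε p.1 p.2).ne')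

lemma iterDeriv_two' (f : ℝ → ℝ) (x : ℝ) : iteratedDeriv 2 f x = deriv (deriv f) x := by
  rw [show (2:ℕ) = 1 + 1 from rfl, iteratedDeriv_succ, iteratedDeriv_one]

lemma keyPDE (ε : ℝ) (hε : 0 < ε) (t x : ℝ) :
    deriv (fun s => UU ε s x) t =
      ε * iteratedDeriv 2 (fun y => UU ε t y) x -
        UU ε t x * deriv (fun y => UU ε t y) x := by
  have hdx : deriv (fun y => UU ε t y) x = Ux ε t x := (hU_x ε t x).deriv
  have hderiv1 : deriv (fun y => UU ε t y) = fun y => Ux ε t y :=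
    funext fun y => (hU_x ε t y).deriv
  have h1 := ((((hEA_x ε t x).mul_const (-1/(20*ε))).const_mul (0.1:ℝ)).add
      (((hEB_x ε t x).mul_const (-1/(4*ε))).const_mul (0.5:ℝ))).add
      ((hEC_x ε x).mul_const (-1/(2*ε)))
  have h2 := (((hEA_x ε t x).mul_const (-1/(20*ε))).add
      ((hEB_x ε t x).mul_const (-1/(4*ε)))).add ((hEC_x ε x).mul_const (-1/(2*ε)))
  have hnum := (h1.mul (hED_x ε t x)).sub ((hUN_x ε t x).mul h2)
  have hden := (hED_x ε t x).pow 2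
  have h3 := hnum.div hden (pow_ne_zero 2 (hED_pos ε t x).ne')
  have h3' : HasDerivAt (fun y => Ux ε t y) _ x := h3
  have hUNt := (((hEA_t ε t x).const_mul (0.1:ℝ)).add
      ((hEB_t ε t x).const_mul (0.5:ℝ))).add (hasDerivAt_const t (EC ε x))
  have hEDt := ((hEA_t ε t x).add (hEB_t ε t x)).add (hasDerivAt_const t (EC ε x))
  have ht' : HasDerivAt (fun s => UU ε s x) _ t := hUNt.div hEDt (hED_pos ε t x).ne'
  rw [ht'.deriv, hdx, iterDeriv_two', hderiv1, h3'.deriv]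
  have h5 : (0:ℝ) < EA ε t x + EB ε t x + EC ε x := hED_pos ε t x
  simp only [UU, UN, Ux, ED]
  norm_num
  field_simp
  ring

/-- The exact solution of the 1D Burgers example is smooth and satisfies
Burgers' equation `u_t = ε u_{xx} − u u_x` everywhere. -/
theorem burgers_exact_solution (ε : ℝ) (hε : 0 < ε)
    (a b c u : ℝ → ℝ → ℝ)
    (ha : ∀ t x, a t x = (-x + 0.5 - 4.95 * t) / (20 * ε))
    (hb : ∀ t x, b t x = (-x + 0.5 - 0.75 * t) / (4 * ε))
    (hc : ∀ t x, c t x = (-x + 0.375) / (2 * ε))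
    (hu : ∀ t x, u t x =
      (0.1 * Real.exp (a t x) + 0.5 * Real.exp (b t x) + Real.exp (c t x)) /
      (Real.exp (a t x) + Real.exp (b t x) + Real.exp (c t x))) :
    ContDiff ℝ (⊤ : ℕ∞) (fun p : ℝ × ℝ => u p.1 p.2) ∧
    ∀ t x : ℝ,
      deriv (fun s => u s x) t =
        ε * iteratedDeriv 2 (fun y => u t y) x -
          u t x * deriv (fun y => u t y) x := by
  have hu' : u = fun t x => UU ε t x := by
    funext t x
    rw [hu, ha, hb, hc]
    simp only [UU, UN, ED, EA, EB, EC]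
  subst hu'
  refine ⟨smoothU ε, fun t x => keyPDE ε hε t x⟩
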